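/- Let a > 3/4. For all cycle configurations ω = (X,X̄,σ,T) and all Z ∈ ℝ: H_left,a(Z|ω) ≥ c11(a)·(|X| + |X̄| + |Z|) and H_right,a(ω|Z) ≥ c11(a)·(|X| + |X̄| + |Z|), where c11(a) = (1/2)·min{a − 3/4, 1/6} > 0. -/
import Mathlib


open MeasureTheory Real

/-- Tree labels A, B, C, D encoded as `Fin 4`. -/
abbrev TreeLabel := Fin 4

def lA : TreeLabel := 0
def lB : TreeLabel := 1
def lC : TreeLabel := 2
def lD : TreeLabel := 3

/-- A cycle configuration `(X, X̄, σ, T)`; the sign `σ` is encoded as a `Bool`. -/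
abbrev CycleConfig := ℝ × ℝ × Bool × TreeLabel

/-- The numerical value of a sign. -/
noncomputable def sgnv (b : Bool) : ℝ := if b then 1 else -1

/-- Real-valued indicator of a proposition. -/
noncomputable def indR (p : Prop) [Decidable p] : ℝ := if p then 1 else 0

/-- `U = (X + X̄)/2`. -/
noncomputable def Uof (ω : CycleConfig) : ℝ := (ω.1 + ω.2.1) / 2

/-- `W = Γ + U' − U`. -/
noncomputable def Wof (ω : CycleConfig) (Γ : ℝ) (ω' : CycleConfig) : ℝ :=
  Γ + Uof ω' - Uof ω

noncomputable def Hln (a : ℝ) (ω : CycleConfig) (Z Γ : ℝ) (ω' : CycleConfig) : ℝ :=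
  ((3 * a + 1) / 2) *
    (Real.log (exp (ω.1 + Wof ω Γ ω' / 2) + exp (ω'.1 - Wof ω Γ ω' / 2) + exp Z)
      + Real.log (exp (ω.2.1 + Wof ω Γ ω' / 2) + exp (ω'.2.1 - Wof ω Γ ω' / 2) + exp Z))

noncomputable def Hlinear (a : ℝ) (ω : CycleConfig) (Z : ℝ) (ω' : CycleConfig) : ℝ :=
  -(a + 1 / 2) * (Uof ω + Uof ω' + Z)

noncomputable def Htree (ω : CycleConfig) (Z Γ : ℝ) (ω' : CycleConfig) : ℝ :=
  (1 / 2) * (indR (ω.2.2.2 = lC) * ω.1 + indR (ω.2.2.2 = lD) * ω.2.1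
      + indR (ω'.2.2.2 = lC) * ω'.1 + indR (ω'.2.2.2 = lD) * ω'.2.1)
    + (indR (ω'.2.2.2 = lB) + indR (ω.2.2.2 = lA)) * Z
    + (1 / 2) * (indR (ω'.2.2.2 = lB) - indR (ω.2.2.2 = lA)) * Wof ω Γ ω'
    - (1 / 2) * (indR (ω.2.2.2 = lA) - indR (ω.2.2.2 = lB)) * Uof ω
    + (1 / 2) * (indR (ω'.2.2.2 = lA) - indR (ω'.2.2.2 = lB)) * Uof ω'

noncomputable def HexpI (ω : CycleConfig) (ω' : CycleConfig) : ℝ :=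
  (1 / 4) * (exp (-ω.1) + exp (-ω.2.1) + exp (-ω'.1) + exp (-ω'.2.1))

noncomputable def HexpII (ω : CycleConfig) (Z Γ : ℝ) (ω' : CycleConfig) : ℝ :=
  (1 / 2) * (sgnv ω.2.2.1 * exp (Wof ω Γ ω' / 4) - sgnv ω'.2.2.1 * exp (-Wof ω Γ ω' / 4)) ^ 2
    * exp (-Z)

/-- The (finite part of the) middle Hamiltonian `H_middle,a,η`. -/
noncomputable def Hmid (a η : ℝ) (ω : CycleConfig) (Z Γ : ℝ) (ω' : CycleConfig) : ℝ :=
  Hln a ω Z Γ ω' + Hlinear a ω Z ω' + Htree ω Z Γ ω' + HexpI ω ω' + HexpII ω Z Γ ω' - η * Γ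

/-- The left boundary Hamiltonian `H_left,a(Z|ω)`. -/
noncomputable def Hleft (a : ℝ) (Z : ℝ) (ω : CycleConfig) : ℝ :=
  a * Real.log (exp ω.2.1 + exp Z)
    + (a + 1 / 2) * (Real.log (exp ω.1 + exp Z) - Uof ω - Z)
    + (1 / 2) * (indR (ω.2.2.2 = lC) * ω.1 + indR (ω.2.2.2 = lD) * ω.2.1)
    + indR (ω.2.2.2 = lB) * Z
    + (1 / 2) * (indR (ω.2.2.2 = lA) - indR (ω.2.2.2 = lB)) * Uof ω
    + (1 / 4) * (exp (-ω.1) + exp (-ω.2.1)) + (1 / 2) * exp (-Z)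
    + Uof ω / 4

/-- The right boundary Hamiltonian `H_right,a(ω|Z)`. -/
noncomputable def Hright (a : ℝ) (ω : CycleConfig) (Z : ℝ) : ℝ :=
  (a + 1 / 2) * (Real.log (exp ω.1 + exp Z) + Real.log (exp ω.2.1 + exp Z) - Uof ω - Z)
    + (1 / 2) * (indR (ω.2.2.2 = lC) * ω.1 + indR (ω.2.2.2 = lD) * ω.2.1)
    + indR (ω.2.2.2 = lA) * Z
    - (1 / 2) * (indR (ω.2.2.2 = lA) - indR (ω.2.2.2 = lB)) * Uof ω
    + (1 / 4) * (exp (-ω.1) + exp (-ω.2.1)) + (1 / 2) * exp (-Z)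
    - Uof ω / 4

set_option maxHeartbeats 2000000


lemma auxL (a m tX tZ X Y Z : ℝ) (ha : 3/4 < a)
    (hm1 : m ≤ a - 3/4) (hm2 : m ≤ 1/6) (hm0 : 0 ≤ m)
    (htx1 : -(1/4) ≤ tX) (htx2 : tX ≤ 1/2) (htz1 : 0 ≤ tZ) (htz2 : tZ ≤ 1)
    (hts1 : 0 ≤ tX + tZ) (hts2 : tX + tZ ≤ 3/4) :
    1/2 * m * (|X| + |Y| + |Z|) ≤
      a * Real.log (Real.exp Y + Real.exp Z)
      + (a + 1/2) * (Real.log (Real.exp X + Real.exp Z) - (X + Y)/2 - Z)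
      + tX * X + (1/2 - tX - tZ) * Y + tZ * Z
      + (1/4) * (Real.exp (-X) + Real.exp (-Y)) + (1/2) * Real.exp (-Z)
      + (X + Y)/8 := by
  have hL1X : (0:ℝ) ≤ Real.log (Real.exp X + Real.exp Z) - X := by
    have h : Real.exp X ≤ Real.exp X + Real.exp Z := le_add_of_nonneg_right (Real.exp_pos Z).le
    have := Real.log_le_log (Real.exp_pos X) h
    rw [Real.log_exp] at this; linarith
  have hL1Z : (0:ℝ) ≤ Real.log (Real.exp X + Real.exp Z) - Z := by
    have h : Real.exp Z ≤ Real.exp X + Real.exp Z := le_add_of_nonneg_left (Real.exp_pos X).le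
    have := Real.log_le_log (Real.exp_pos Z) h
    rw [Real.log_exp] at this; linarith
  have hL2Y : (0:ℝ) ≤ Real.log (Real.exp Y + Real.exp Z) - Y := by
    have h : Real.exp Y ≤ Real.exp Y + Real.exp Z := le_add_of_nonneg_right (Real.exp_pos Z).le
    have := Real.log_le_log (Real.exp_pos Y) h
    rw [Real.log_exp] at this; linarith
  have hL2Z : (0:ℝ) ≤ Real.log (Real.exp Y + Real.exp Z) - Z := by
    have h : Real.exp Z ≤ Real.exp Y + Real.exp Z := le_add_of_nonneg_left (Real.exp_pos Y).le
    have := Real.log_le_log (Real.exp_pos Z) h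
    rw [Real.log_exp] at this; linarith
  have eX : 1 - X ≤ Real.exp (-X) := by have := Real.add_one_le_exp (-X); linarith
  have eY : 1 - Y ≤ Real.exp (-Y) := by have := Real.add_one_le_exp (-Y); linarith
  have eZ : 1 - Z ≤ Real.exp (-Z) := by have := Real.add_one_le_exp (-Z); linarith
  have ga : (0:ℝ) ≤ a - 3/4 := by linarith
  have gm : (0:ℝ) ≤ m := hm0
  have g16 : (0:ℝ) ≤ 1/6 - m := by linarith
  have gam : (0:ℝ) ≤ a - 3/4 - m := by linarith
  have gx1 : (0:ℝ) ≤ tX + 1/4 := by linarith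
  have gx2 : (0:ℝ) ≤ 1/2 - tX := by linarith
  have gz1 : (0:ℝ) ≤ tZ := htz1
  have gz2 : (0:ℝ) ≤ 1 - tZ := by linarith
  have gs1 : (0:ℝ) ≤ tX + tZ := hts1
  have gs2 : (0:ℝ) ≤ 3/4 - (tX + tZ) := by linarith
  rcases abs_cases X with ⟨hX, sX⟩ | ⟨hX, sX⟩ <;>
    rcases abs_cases Y with ⟨hY, sY⟩ | ⟨hY, sY⟩ <;>
      rcases abs_cases Z with ⟨hZ, sZ⟩ | ⟨hZ, sZ⟩ <;>
        rw [hX, hY, hZ] <;>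
        (first | have px : (0:ℝ) ≤ X := by linarith | have px : (0:ℝ) ≤ -X := by linarith) <;>
        (first | have py : (0:ℝ) ≤ Y := by linarith | have py : (0:ℝ) ≤ -Y := by linarith) <;>
        (first | have pz : (0:ℝ) ≤ Z := by linarith | have pz : (0:ℝ) ≤ -Z := by linarith) <;>
        linarith [mul_nonneg ga hL1X, mul_nonneg ga hL1Z, mul_nonneg ga hL2Y, mul_nonneg ga hL2Z, mul_nonneg ga px, mul_nonneg ga py, mul_nonneg ga pz, mul_nonneg gm hL1X, mul_nonneg gm hL1Z, mul_nonneg gm hL2Y, mul_nonneg gm hL2Z, mul_nonneg gm px, mul_nonneg gm py, mul_nonneg gm pz, mul_nonneg g16 hL1X, mul_nonneg g16 hL1Z, mul_nonneg g16 hL2Y, mul_nonneg g16 hL2Z, mul_nonneg g16 px, mul_nonneg g16 py, mul_nonneg g16 pz, mul_nonneg gam hL1X, mul_nonneg gam hL1Z, mul_nonneg gam hL2Y, mul_nonneg gam hL2Z, mul_nonneg gam px, mul_nonneg gam py, mul_nonneg gam pz, mul_nonneg gx1 hL1X, mul_nonneg gx1 hL1Z, mul_nonneg gx1 hL2Y,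 mul_nonneg gx1 hL2Z, mul_nonneg gx1 px, mul_nonneg gx1 py, mul_nonneg gx1 pz, mul_nonneg gx2 hL1X, mul_nonneg gx2 hL1Z, mul_nonneg gx2 hL2Y, mul_nonneg gx2 hL2Z, mul_nonneg gx2 px, mul_nonneg gx2 py, mul_nonneg gx2 pz, mul_nonneg gz1 hL1X, mul_nonneg gz1 hL1Z, mul_nonneg gz1 hL2Y, mul_nonneg gz1 hL2Z, mul_nonneg gz1 px, mul_nonneg gz1 py, mul_nonneg gz1 pz, mul_nonneg gz2 hL1X, mul_nonneg gz2 hL1Z, mul_nonneg gz2 hL2Y, mul_nonneg gz2 hL2Z, mul_nonneg gz2 px, mul_nonneg gz2 py, mul_nonneg gz2 pz, mul_nonneg gs1 hL1X, mul_nonneg gs1 hL1Z, mul_nonneg gs1 hL2Y, mul_nonneg gs1 hL2Z, mul_nonneg gs1 px, mul_nonneg gs1 py, mul_nonneg gs1 pz, mul_nonneg gs2 hL1X, mul_nonneg gs2 hL1Z, mul_nonneg gs2 hL2Y, mul_nonneg gs2 hL2Z, mul_nonneg gs2 px, mul_nonneg gs2 py, mul_nonneg gs2 pz, hL1X, hL1Z,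 hL2Y, hL2Z, eX, eY, eZ, (Real.exp_pos (-X)).le, (Real.exp_pos (-Y)).le, (Real.exp_pos (-Z)).le]

lemma auxR (a m tX tZ X Y Z : ℝ) (ha : 3/4 < a)
    (hm1 : m ≤ a - 3/4) (hm2 : m ≤ 1/6) (hm0 : 0 ≤ m)
    (htx1 : -(1/4) ≤ tX) (htx2 : tX ≤ 1/2) (htz1 : 0 ≤ tZ) (htz2 : tZ ≤ 1)
    (hts1 : 0 ≤ tX + tZ) (hts2 : tX + tZ ≤ 3/4) :
    1/2 * m * (|X| + |Y| + |Z|) ≤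
      (a + 1/2) * (Real.log (Real.exp X + Real.exp Z)
        + Real.log (Real.exp Y + Real.exp Z) - (X + Y)/2 - Z)
      + tX * X + (1/2 - tX - tZ) * Y + tZ * Z
      + (1/4) * (Real.exp (-X) + Real.exp (-Y)) + (1/2) * Real.exp (-Z)
      - (X + Y)/8 := by
  have hL1X : (0:ℝ) ≤ Real.log (Real.exp X + Real.exp Z) - X := by
    have h : Real.exp X ≤ Real.exp X + Real.exp Z := le_add_of_nonneg_right (Real.exp_pos Z).le
    have := Real.log_le_log (Real.exp_pos X) h
    rw [Real.log_exp] at this; linarith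
  have hL1Z : (0:ℝ) ≤ Real.log (Real.exp X + Real.exp Z) - Z := by
    have h : Real.exp Z ≤ Real.exp X + Real.exp Z := le_add_of_nonneg_left (Real.exp_pos X).le
    have := Real.log_le_log (Real.exp_pos Z) h
    rw [Real.log_exp] at this; linarith
  have hL2Y : (0:ℝ) ≤ Real.log (Real.exp Y + Real.exp Z) - Y := by
    have h : Real.exp Y ≤ Real.exp Y + Real.exp Z := le_add_of_nonneg_right (Real.exp_pos Z).le
    have := Real.log_le_log (Real.exp_pos Y) h
    rw [Real.log_exp] at this; linarith
  have hL2Z : (0:ℝ) ≤ Real.log (Real.exp Y + Real.exp Z) - Z := by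
    have h : Real.exp Z ≤ Real.exp Y + Real.exp Z := le_add_of_nonneg_left (Real.exp_pos Y).le
    have := Real.log_le_log (Real.exp_pos Z) h
    rw [Real.log_exp] at this; linarith
  have eX : 1 - X ≤ Real.exp (-X) := by have := Real.add_one_le_exp (-X); linarith
  have eY : 1 - Y ≤ Real.exp (-Y) := by have := Real.add_one_le_exp (-Y); linarith
  have eZ : 1 - Z ≤ Real.exp (-Z) := by have := Real.add_one_le_exp (-Z); linarith
  have ga : (0:ℝ) ≤ a - 3/4 := by linarith
  have gm : (0:ℝ) ≤ m := hm0
  have g16 : (0:ℝ) ≤ 1/6 - m := by linarith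
  have gam : (0:ℝ) ≤ a - 3/4 - m := by linarith
  have gx1 : (0:ℝ) ≤ tX + 1/4 := by linarith
  have gx2 : (0:ℝ) ≤ 1/2 - tX := by linarith
  have gz1 : (0:ℝ) ≤ tZ := htz1
  have gz2 : (0:ℝ) ≤ 1 - tZ := by linarith
  have gs1 : (0:ℝ) ≤ tX + tZ := hts1
  have gs2 : (0:ℝ) ≤ 3/4 - (tX + tZ) := by linarith
  rcases abs_cases X with ⟨hX, sX⟩ | ⟨hX, sX⟩ <;>
    rcases abs_cases Y with ⟨hY, sY⟩ | ⟨hY, sY⟩ <;>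
      rcases abs_cases Z with ⟨hZ, sZ⟩ | ⟨hZ, sZ⟩ <;>
        rw [hX, hY, hZ] <;>
        (first | have px : (0:ℝ) ≤ X := by linarith | have px : (0:ℝ) ≤ -X := by linarith) <;>
        (first | have py : (0:ℝ) ≤ Y := by linarith | have py : (0:ℝ) ≤ -Y := by linarith) <;>
        (first | have pz : (0:ℝ) ≤ Z := by linarith | have pz : (0:ℝ) ≤ -Z := by linarith) <;>
        linarith [mul_nonneg ga hL1X, mul_nonneg ga hL1Z, mul_nonneg ga hL2Y, mul_nonneg ga hL2Z, mul_nonneg ga px, mul_nonneg ga py, mul_nonneg ga pz, mul_nonneg gm hL1X, mul_nonneg gm hL1Z, mul_nonneg gm hL2Y, mul_nonneg gm hL2Z, mul_nonneg gm px, mul_nonneg gm py, mul_nonneg gm pz, mul_nonneg g16 hL1X, mul_nonneg g16 hL1Z, mul_nonneg g16 hL2Y, mul_nonneg g16 hL2Z, mul_nonneg g16 px, mul_nonneg g16 py, mul_nonneg g16 pz, mul_nonneg gam hL1X, mul_nonneg gam hL1Z, mul_nonneg gam hL2Y, mul_nonneg gam hL2Z, mul_nonneg gam px, mul_nonneg gam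 py, mul_nonneg gam pz, mul_nonneg gx1 hL1X, mul_nonneg gx1 hL1Z, mul_nonneg gx1 hL2Y, mul_nonneg gx1 hL2Z, mul_nonneg gx1 px, mul_nonneg gx1 py, mul_nonneg gx1 pz, mul_nonneg gx2 hL1X, mul_nonneg gx2 hL1Z, mul_nonneg gx2 hL2Y, mul_nonneg gx2 hL2Z, mul_nonneg gx2 px, mul_nonneg gx2 py, mul_nonneg gx2 pz, mul_nonneg gz1 hL1X, mul_nonneg gz1 hL1Z, mul_nonneg gz1 hL2Y, mul_nonneg gz1 hL2Z, mul_nonneg gz1 px, mul_nonneg gz1 py, mul_nonneg gz1 pz, mul_nonneg gz2 hL1X, mul_nonneg gz2 hL1Z, mul_nonneg gz2 hL2Y, mul_nonneg gz2 hL2Z, mul_nonneg gz2 px, mul_nonneg gz2 py, mul_nonneg gz2 pz, mul_nonneg gs1 hL1X, mul_nonneg gs1 hL1Z, mul_nonneg gs1 hL2Y, mul_nonneg gs1 hL2Z, mul_nonneg gs1 px, mul_nonneg gs1 py, mul_nonneg gs1 pz, mul_nonneg gs2 hL1X, mul_nonneg gs2 hL1Z, mul_nonneg gs2 hL2Y,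 mul_nonneg gs2 hL2Z, mul_nonneg gs2 px, mul_nonneg gs2 py, mul_nonneg gs2 pz, hL1X, hL1Z, hL2Y, hL2Z, eX, eY, eZ, (Real.exp_pos (-X)).le, (Real.exp_pos (-Y)).le, (Real.exp_pos (-Z)).le]


/-- Proposition 3.5: for `a > 3/4`, the boundary Hamiltonians are bounded below by
`c₁₁(a)·(|X| + |X̄| + |Z|)` with `c₁₁(a) = (1/2)·min{a − 3/4, 1/6}`. -/
theorem boundary_hamiltonian_lower_bound (a : ℝ) (ha : 3 / 4 < a)
    (ω : CycleConfig) (Z : ℝ) :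
    (1 / 2) * min (a - 3 / 4) (1 / 6) * (|ω.1| + |ω.2.1| + |Z|) ≤ Hleft a Z ω ∧
    (1 / 2) * min (a - 3 / 4) (1 / 6) * (|ω.1| + |ω.2.1| + |Z|) ≤ Hright a ω Z := by
  obtain ⟨X, Y, σ, T⟩ := ω
  have hm1 : min (a - 3/4) (1/6) ≤ a - 3/4 := min_le_left _ _
  have hm2 : min (a - 3/4) (1/6) ≤ 1/6 := min_le_right _ _
  have hm0 : (0:ℝ) ≤ min (a - 3/4) (1/6) := le_min (by linarith) (by norm_num)
  have hT : T = lA ∨ T = lB ∨ T = lC ∨ T = lD := by fin_cases T <;> decide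
  constructor <;> rcases hT with h|h|h|h <;> subst h <;>
    simp [Hleft, Hright, Uof, indR, lA, lB, lC, lD]
  · linarith [auxL a (min (a-3/4) (1/6)) (1/4) 0 X Y Z ha hm1 hm2 hm0 (by norm_num) (by norm_num) (by norm_num) (by norm_num) (by norm_num) (by norm_num)]
  · linarith [auxL a (min (a-3/4) (1/6)) (-(1/4)) 1 X Y Z ha hm1 hm2 hm0 (by norm_num) (by norm_num) (by norm_num) (by norm_num) (by norm_num) (by norm_num)]
  · linarith [auxL a (min (a-3/4) (1/6)) (1/2) 0 X Y Z ha hm1 hm2 hm0 (by norm_num) (by norm_num) (by norm_num) (by norm_num) (by norm_num) (by norm_num)]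
  · linarith [auxL a (min (a-3/4) (1/6)) 0 0 X Y Z ha hm1 hm2 hm0 (by norm_num) (by norm_num) (by norm_num) (by norm_num) (by norm_num) (by norm_num)]
  · linarith [auxR a (min (a-3/4) (1/6)) (-(1/4)) 1 X Y Z ha hm1 hm2 hm0 (by norm_num) (by norm_num) (by norm_num) (by norm_num) (by norm_num) (by norm_num)]
  · linarith [auxR a (min (a-3/4) (1/6)) (1/4) 0 X Y Z ha hm1 hm2 hm0 (by norm_num) (by norm_num) (by norm_num) (by norm_num) (by norm_num) (by norm_num)]
  · linarith [auxR a (min (a-3/4) (1/6)) (1/2) 0 X Y Z ha hm1 hm2 hm0 (by norm_num) (by norm_num) (by norm_num) (by norm_num) (by norm_num) (by norm_num)]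
  · linarith [auxR a (min (a-3/4) (1/6)) 0 0 X Y Z ha hm1 hm2 hm0 (by norm_num) (by norm_num) (by norm_num) (by norm_num) (by norm_num) (by norm_num)]
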